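/- Optimality of Voronoi partitions: let Q ⊂ ℝ^d be compact convex, φ positive bounded measurable, f : ℝ≥0 → ℝ≥0 increasing. For any N-partition v = (v₁,…,v_N) of Q (closed sets with nonempty interiors covering Q, with pairwise disjoint interiors) and any N distinct points p = (p₁,…,p_N) ∈ Q^N, the multicenter cost H(v,p) = Σᵢ ∫_{vᵢ} f(‖pᵢ−q‖) φ(q) dq satisfies H(V(p), p) ≤ H(v, p), where V(p) is the Voronoi partition of Q generated by p. -/

import Mathlib

/-!
Put `m q = minⱼ f ‖pⱼ - q‖ * φ q`. On the Voronoi cell of `pᵢ` the `i`-th integrand equals `m`,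
and two distinct cells meet only inside a bisector hyperplane, which is Lebesgue-null; hence the
Voronoi cost is `∫_Q m`. For an arbitrary partition only the covering `⋃ vᵢ = Q` matters: since
`m ≥ 0`, `∫_Q m ≤ ∑ᵢ ∫_{vᵢ} m ≤ ∑ᵢ ∫_{vᵢ} f ‖pᵢ - q‖ * φ q`.
-/

open MeasureTheory Set

section SetIntegral

variable {α ι : Type*} [MeasurableSpace α] {μ : Measure α}

theorem setIntegral_iUnion_le_sum [Fintype ι] {s : ι → Set α} {f : α → ℝ}
    (hs : ∀ i, MeasurableSet (s i)) (hf : IntegrableOn f (⋃ i, s i) μ)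
    (hf0 : ∀ x ∈ ⋃ i, s i, 0 ≤ f x) :
    ∫ x in ⋃ i, s i, f x ∂μ ≤ ∑ i, ∫ x in s i, f x ∂μ := by
  have hfi : ∀ i, IntegrableOn f (s i) μ := fun i => hf.mono_set (subset_iUnion s i)
  have hf0' : ∀ i, 0 ≤ᵐ[μ.restrict (s i)] f := fun i =>
    ae_restrict_of_forall_mem (hs i) fun x hx => hf0 x (mem_iUnion_of_mem i hx)
  rw [← integral_finsetSum_measure fun i _ => hfi i, ← Measure.sum_fintype]
  refine integral_mono_measure Measure.restrict_iUnion_le ?_ ?_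
  · exact Measure.ae_sum_iff.2 hf0'
  · rw [Measure.sum_fintype]
    exact integrable_finsetSum_measure.2 fun i _ => hfi i

theorem integrableOn_iInf [Finite ι] [Nonempty ι] {Q : Set α} {g : ι → α → ℝ}
    (hQ : MeasurableSet Q) (hg : ∀ i, IntegrableOn (g i) Q μ) (hg0 : ∀ i, ∀ x ∈ Q, 0 ≤ g i x) :
    IntegrableOn (fun x => ⨅ i, g i x) Q μ := by
  let i₀ := Classical.arbitrary ι
  refine (hg i₀).mono' (AEMeasurable.iInf fun i => (hg i).aemeasurable).aestronglyMeasurable ?_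
  refine ae_restrict_of_forall_mem hQ fun x hx => ?_
  rw [Real.norm_eq_abs, abs_of_nonneg (le_ciInf fun i => hg0 i x hx)]
  exact ciInf_le (finite_range _).bddBelow i₀

end SetIntegral

section Voronoi

variable {E ι : Type*} [NormedAddCommGroup E] {Q : Set E} {p : ι → E}

def voronoiCell (Q : Set E) (p : ι → E) (i : ι) : Set E := {q ∈ Q | ∀ j, ‖q - p i‖ ≤ ‖q - p j‖}

theorem voronoiCell_subset {i : ι} : voronoiCell Q p i ⊆ Q := fun _ hq => hq.1

variable (Q p) in
theorem iUnion_voronoiCell [Finite ι] [Nonempty ι] : ⋃ i, voronoiCell Q p i = Q := by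
  refine (iUnion_subset fun _ => voronoiCell_subset).antisymm fun q hq => ?_
  obtain ⟨i, hi⟩ := Finite.exists_min fun j => ‖q - p j‖
  exact mem_iUnion.2 ⟨i, hq, hi⟩

theorem measurableSet_voronoiCell [MeasurableSpace E] [OpensMeasurableSpace E] [Countable ι]
    (hQ : MeasurableSet Q) (i : ι) : MeasurableSet (voronoiCell Q p i) := by
  have : voronoiCell Q p i = Q ∩ ⋂ j, {q | ‖q - p i‖ ≤ ‖q - p j‖} := by
    ext; simp [voronoiCell]
  rw [this]
  exact hQ.inter (.iInter fun j => (isClosed_le (by fun_prop) (by fun_prop)).measurableSet)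

theorem voronoiCell_inter_subset_perpBisector [InnerProductSpace ℝ E] (i j : ι) :
    voronoiCell Q p i ∩ voronoiCell Q p j ⊆ AffineSubspace.perpBisector (p i) (p j) :=
  fun q ⟨hi, hj⟩ => by
    rw [SetLike.mem_coe, AffineSubspace.mem_perpBisector_iff_dist_eq, dist_eq_norm, dist_eq_norm]
    exact (hi.2 j).antisymm (hj.2 i)

theorem aedisjoint_voronoiCell [InnerProductSpace ℝ E] [FiniteDimensional ℝ E] [MeasurableSpace E]
    [BorelSpace E] {μ : Measure E} [μ.IsAddHaarMeasure] {i j : ι} (hp : p i ≠ p j) :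
    AEDisjoint μ (voronoiCell Q p i) (voronoiCell Q p j) :=
  measure_mono_null (voronoiCell_inter_subset_perpBisector i j)
    (Measure.addHaar_affineSubspace μ _ (by simpa using hp))

theorem iInf_eq_of_mem_voronoiCell [Finite ι] {g : ι → E → ℝ}
    (hg : ∀ q ∈ Q, ∀ i j, ‖q - p i‖ ≤ ‖q - p j‖ → g i q ≤ g j q) {i : ι} {q : E}
    (hq : q ∈ voronoiCell Q p i) : ⨅ j, g j q = g i q :=
  have : Nonempty ι := ⟨i⟩
  le_antisymm (ciInf_le (finite_range _).bddBelow i) (le_ciInf fun j => hg q hq.1 i j (hq.2 j))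

end Voronoi

section Optimality

variable {E ι : Type*} [NormedAddCommGroup E] [InnerProductSpace ℝ E] [FiniteDimensional ℝ E]
  [MeasurableSpace E] [BorelSpace E] {μ : Measure E} [μ.IsAddHaarMeasure] {Q : Set E} {p : ι → E}

theorem sum_setIntegral_voronoiCell [Fintype ι] [Nonempty ι] (hp : Function.Injective p)
    (hQ : MeasurableSet Q) {f : E → ℝ} (hf : IntegrableOn f Q μ) :
    ∑ i, ∫ q in voronoiCell Q p i, f q ∂μ = ∫ q in Q, f q ∂μ := by
  conv_rhs => rw [← iUnion_voronoiCell Q p]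
  rw [integral_iUnion_ae (fun i => (measurableSet_voronoiCell hQ i).nullMeasurableSet)
    (fun i j hij => aedisjoint_voronoiCell (hp.ne hij)) (by rwa [iUnion_voronoiCell]),
    tsum_fintype]

theorem sum_setIntegral_voronoiCell_le [Fintype ι] {g : ι → E → ℝ} (hp : Function.Injective p)
    (hQ : MeasurableSet Q) (hg : ∀ i, IntegrableOn (g i) Q μ) (hg0 : ∀ i, ∀ q ∈ Q, 0 ≤ g i q)
    (hg_le : ∀ q ∈ Q, ∀ i j, ‖q - p i‖ ≤ ‖q - p j‖ → g i q ≤ g j q)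
    {v : ι → Set E} (hv : ∀ i, MeasurableSet (v i)) (hvQ : ⋃ i, v i = Q) :
    ∑ i, ∫ q in voronoiCell Q p i, g i q ∂μ ≤ ∑ i, ∫ q in v i, g i q ∂μ := by
  cases isEmpty_or_nonempty ι
  · simp
  set m : E → ℝ := fun q => ⨅ j, g j q
  have hm : IntegrableOn m Q μ := integrableOn_iInf hQ hg hg0
  have hvQ' : ∀ i, v i ⊆ Q := fun i => hvQ ▸ subset_iUnion v i
  calc ∑ i, ∫ q in voronoiCell Q p i, g i q ∂μ
      = ∑ i, ∫ q in voronoiCell Q p i, m q ∂μ :=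
        Finset.sum_congr rfl fun i _ => setIntegral_congr_fun (measurableSet_voronoiCell hQ i)
          fun q hq => (iInf_eq_of_mem_voronoiCell hg_le hq).symm
    _ = ∫ q in Q, m q ∂μ := sum_setIntegral_voronoiCell hp hQ hm
    _ ≤ ∑ i, ∫ q in v i, m q ∂μ := by
        subst hvQ
        exact setIntegral_iUnion_le_sum hv hm fun q hq => le_ciInf fun j => hg0 j q hq
    _ ≤ ∑ i, ∫ q in v i, g i q ∂μ :=
        Finset.sum_le_sum fun i _ => setIntegral_mono_on (hm.mono_set (hvQ' i))
          ((hg i).mono_set (hvQ' i)) (hv i) fun q _ => ciInf_le (finite_range _).bddBelow i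

end Optimality

section Cost

theorem MonotoneOn.measurable_comp_of_nonneg {α : Type*} [MeasurableSpace α] {f : ℝ → ℝ}
    (hf : MonotoneOn f (Ici 0)) {g : α → ℝ} (hg : Measurable g) (hg0 : ∀ a, 0 ≤ g a) :
    Measurable fun a => f (g a) := by
  have hmono : Monotone fun t => f (max t 0) := fun s t hst =>
    hf (le_max_right s 0) (le_max_right t 0) (max_le_max_right 0 hst)
  simpa only [Function.comp_def, max_eq_left (hg0 _)] using hmono.measurable.comp hg

theorem integrableOn_comp_norm_sub_mul {E : Type*} [NormedAddCommGroup E] [MeasurableSpace E]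
    [OpensMeasurableSpace E] {μ : Measure E} [IsFiniteMeasureOnCompacts μ] {Q : Set E}
    (hQ : IsCompact Q) {f : ℝ → ℝ} (hf0 : ∀ t ∈ Ici 0, 0 ≤ f t) (hf : MonotoneOn f (Ici 0))
    {φ : E → ℝ} (hφm : Measurable φ) (hφ0 : ∀ q ∈ Q, 0 ≤ φ q) (hφ : ∃ M, ∀ q ∈ Q, φ q ≤ M)
    (x : E) : IntegrableOn (fun q => f ‖x - q‖ * φ q) Q μ := by
  obtain ⟨M, hM⟩ := hφ
  obtain ⟨R, hR⟩ := hQ.exists_bound_of_continuousOn (f := fun q => x - q) (by fun_prop)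
  have hfm : Measurable fun q => f ‖x - q‖ :=
    hf.measurable_comp_of_nonneg (continuous_const.sub continuous_id).norm.measurable
      fun _ => norm_nonneg _
  refine Measure.integrableOn_of_bounded (M := f R * M) hQ.measure_lt_top.ne
    (hfm.mul hφm).aestronglyMeasurable (ae_restrict_of_forall_mem hQ.measurableSet fun q hq => ?_)
  have hfR : f ‖x - q‖ ≤ f R := hf (norm_nonneg _) ((norm_nonneg _).trans (hR q hq)) (hR q hq)
  rw [Real.norm_eq_abs, abs_of_nonneg (mul_nonneg (hf0 _ (norm_nonneg _)) (hφ0 q hq))]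
  exact mul_le_mul hfR (hM q hq) (hφ0 q hq) ((hf0 _ (norm_nonneg _)).trans hfR)

end Cost

theorem stmt_18_general (d N : ℕ) (Q : Set (EuclideanSpace ℝ (Fin d)))
    (hQc : IsCompact Q)
    (φ : EuclideanSpace ℝ (Fin d) → ℝ) (hφm : Measurable φ)
    (hφpos : ∀ x ∈ Q, 0 < φ x) (hφbdd : ∃ M, ∀ x ∈ Q, φ x ≤ M)
    (f : ℝ → ℝ) (hf0 : ∀ x ∈ Set.Ici (0:ℝ), 0 ≤ f x)
    (hfmono : MonotoneOn f (Set.Ici (0:ℝ)))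
    (v : Fin N → Set (EuclideanSpace ℝ (Fin d)))
    (hvcl : ∀ i, IsClosed (v i))
    (hvcover : (⋃ i, v i) = Q)
    (p : Fin N → EuclideanSpace ℝ (Fin d))
    (hpdist : ∀ i j, i ≠ j → p i ≠ p j) :
    (∑ i, ∫ q in {q ∈ Q | ∀ j, ‖q - p i‖ ≤ ‖q - p j‖}, f (‖p i - q‖) * φ q) ≤
      ∑ i, ∫ q in v i, f (‖p i - q‖) * φ q := by
  have hφ0 : ∀ x ∈ Q, 0 ≤ φ x := fun x hx => (hφpos x hx).le
  refine sum_setIntegral_voronoiCell_le (fun i j => not_imp_not.1 (hpdist i j))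
    hQc.measurableSet (fun i => integrableOn_comp_norm_sub_mul hQc hf0 hfmono hφm hφ0 hφbdd (p i))
    (fun i q hq => mul_nonneg (hf0 _ (norm_nonneg _)) (hφ0 q hq)) (fun q hq i j hij => ?_)
    (fun i => (hvcl i).measurableSet) hvcover
  rw [norm_sub_rev (p i), norm_sub_rev (p j)]
  exact mul_le_mul_of_nonneg_right (hfmono (norm_nonneg _) (norm_nonneg _) hij) (hφ0 q hq)

/-- Optimality of Voronoi partitions: for any `N`-partition `v` of the compact
convex set `Q ⊂ ℝ^d` (closed sets with nonempty interiors covering `Q` with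
pairwise disjoint interiors), any `N` distinct points `p ∈ Q^N`, positive
bounded measurable `φ` and increasing `f`, the multicenter cost of the
Voronoi partition generated by `p` does not exceed that of `v`. -/
theorem stmt_18 (d N : ℕ) (Q : Set (EuclideanSpace ℝ (Fin d)))
    (hQc : IsCompact Q) (hQconv : Convex ℝ Q)
    (φ : EuclideanSpace ℝ (Fin d) → ℝ) (hφm : Measurable φ)
    (hφpos : ∀ x ∈ Q, 0 < φ x) (hφbdd : ∃ M, ∀ x ∈ Q, φ x ≤ M)
    (f : ℝ → ℝ) (hf0 : ∀ x ∈ Set.Ici (0:ℝ), 0 ≤ f x)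
    (hfmono : MonotoneOn f (Set.Ici (0:ℝ)))
    (v : Fin N → Set (EuclideanSpace ℝ (Fin d)))
    (hvcl : ∀ i, IsClosed (v i)) (hvint : ∀ i, (interior (v i)).Nonempty)
    (hvQ : ∀ i, v i ⊆ Q) (hvcover : (⋃ i, v i) = Q)
    (hvdisj : ∀ i j, i ≠ j → interior (v i) ∩ interior (v j) = ∅)
    (p : Fin N → EuclideanSpace ℝ (Fin d))
    (hpQ : ∀ i, p i ∈ Q) (hpdist : ∀ i j, i ≠ j → p i ≠ p j) :
    (∑ i, ∫ q in {q ∈ Q | ∀ j, ‖q - p i‖ ≤ ‖q - p j‖}, f (‖p i - q‖) * φ q) ≤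
      ∑ i, ∫ q in v i, f (‖p i - q‖) * φ q :=
  stmt_18_general d N Q hQc φ hφm hφpos hφbdd f hf0 hfmono v hvcl hvcover p hpdist
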